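/- Let (X^n, Y^n) be such that X_1,…,X_n are i.i.d. Bernoulli(1/2), Y_k = X_k ⊕ V_k with V_1,…,V_n i.i.d. Bernoulli(α) independent of X^n, α ∈ (0, 1/2). Then there exists ε_L with 1/2 ≤ ε_L < ᾱ such that for every n ≥ 1 and every ε ∈ [ε_L, ᾱ], h_n^i(ε) ≤ h̲_n(ε) ≤ h_n^i(ε) + α/(2ᾱ). -/
import Mathlib


noncomputable section

/-- A row-stochastic matrix (channel) from an `n`-ary input to a `k`-ary output. -/
def IsStoch {n k : ℕ} (F : Fin n → Fin k → ℝ) : Prop :=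
  (∀ y z, 0 ≤ F y z) ∧ ∀ y, ∑ z, F y z = 1

/-- A joint pmf on `{1,…,m} × {1,…,n}`. -/
def IsPmf {m n : ℕ} (P : Fin m → Fin n → ℝ) : Prop :=
  (∀ x y, 0 ≤ P x y) ∧ ∑ x, ∑ y, P x y = 1

/-- `P_c(X) = max_x P_X(x)`. -/
def pcX {m n : ℕ} (P : Fin m → Fin n → ℝ) : ℝ := ⨆ x, ∑ y, P x y

/-- `P_c(Y) = max_y P_Y(y)`. -/
def pcY {m n : ℕ} (P : Fin m → Fin n → ℝ) : ℝ := ⨆ y, ∑ x, P x y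

/-- `P_c(X|Y) = Σ_y max_x P_{XY}(x,y)`. -/
def pcXgY {m n : ℕ} (P : Fin m → Fin n → ℝ) : ℝ := ∑ y, ⨆ x, P x y

/-- `𝒫(F) = P_c(X|Z) = Σ_z max_x Σ_y P_{XY}(x,y) F(y,z)` for a filter `F = P_{Z|Y}`
under the Markov chain `X – Y – Z`. -/
def privP {m n k : ℕ} (P : Fin m → Fin n → ℝ) (F : Fin n → Fin k → ℝ) : ℝ :=
  ∑ z, ⨆ x, ∑ y, P x y * F y z

/-- `𝒰(F) = P_c(Y|Z) = Σ_z max_y P_Y(y) F(y,z)` for a filter `F = P_{Z|Y}`. -/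
def privU {m n k : ℕ} (P : Fin m → Fin n → ℝ) (F : Fin n → Fin k → ℝ) : ℝ :=
  ∑ z, ⨆ y, (∑ x, P x y) * F y z

/-- The set `ℱ` of privacy filters: `n × (n+1)` row-stochastic matrices. -/
def filtSet (n : ℕ) : Set (Fin n → Fin (n + 1) → ℝ) := {F | IsStoch F}

/-- The privacy-aware guessing function
`h(P_{XY}, ε) = max { 𝒰(F) : F ∈ ℱ, 𝒫(F) ≤ ε }`. -/
def hFun {m n : ℕ} (P : Fin m → Fin n → ℝ) (ε : ℝ) : ℝ :=
  sSup {u | ∃ F ∈ filtSet n, privP P F ≤ ε ∧ privU P F = u}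

open scoped Classical

/-- The scalar joint pmf of `(X, Y)` where `X ∼ Bernoulli(p)` (i.e. `P(X=1) = p`) and
`Y = X ⊕ V` with `V ∼ Bernoulli(α)` independent of `X` (a BSC(α)). -/
def pXY (p α : ℝ) : Fin 2 → Fin 2 → ℝ := fun x y =>
  (if x = 1 then p else 1 - p) * (if y = x then 1 - α else α)

/-- The i.i.d. joint pmf of `(X^n, Y^n)`:
`P_{X^nY^n}(x,y) = Π_k P_{XY}(x_k, y_k)`. -/
def pXYn (n : ℕ) (p α : ℝ) : (Fin n → Fin 2) → (Fin n → Fin 2) → ℝ := fun x y =>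
  ∏ k, pXY p α (x k) (y k)

/-- A channel on binary `n`-vectors (row-stochastic, not necessarily memoryless). -/
def IsChan (n : ℕ) (Q : (Fin n → Fin 2) → (Fin n → Fin 2) → ℝ) : Prop :=
  (∀ y z, 0 ≤ Q y z) ∧ ∀ y, ∑ z, Q y z = 1

/-- `P_c(X^n | Z^n)` when `Z^n` is generated from `Y^n` via the channel `Q`
(Markov chain `X^n – Y^n – Z^n`). -/
def pcXZn (n : ℕ) (p α : ℝ) (Q : (Fin n → Fin 2) → (Fin n → Fin 2) → ℝ) : ℝ :=
  ∑ z, ⨆ x, ∑ y, pXYn n p α x y * Q y z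

/-- `P_c(Y^n | Z^n)` when `Z^n` is generated from `Y^n` via the channel `Q`. -/
def pcYZn (n : ℕ) (p α : ℝ) (Q : (Fin n → Fin 2) → (Fin n → Fin 2) → ℝ) : ℝ :=
  ∑ z, ⨆ y, (∑ x, pXYn n p α x y) * Q y z

/-- `h̲_n(ε) = max P_c(Y^n|Z^n)^{1/n}` over all channels `P_{Z^n|Y^n}` with binary output
vectors forming the Markov chain `X^n – Y^n – Z^n` and with `P_c(X^n|Z^n) ≤ ε^n`. -/
def hLow (n : ℕ) (p α : ℝ) (ε : ℝ) : ℝ :=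
  sSup {u : ℝ | ∃ Q, IsChan n Q ∧ pcXZn n p α Q ≤ ε ^ n ∧
    u = pcYZn n p α Q ^ ((n : ℝ)⁻¹)}

/-- The memoryless channel on binary `n`-vectors obtained by applying a single
binary-input binary-output channel `W` coordinatewise. -/
def memoryless (n : ℕ) (W : Fin 2 → Fin 2 → ℝ) :
    (Fin n → Fin 2) → (Fin n → Fin 2) → ℝ := fun y z => ∏ k, W (y k) (z k)

/-- `h_n^i(ε) = max P_c(Y^n|Z^n)^{1/n}` over all memoryless binary privacy filters
(a single BIBO channel applied coordinatewise) with `P_c(X^n|Z^n) ≤ ε^n`. -/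
def hIid (n : ℕ) (p α : ℝ) (ε : ℝ) : ℝ :=
  sSup {u : ℝ | ∃ W : Fin 2 → Fin 2 → ℝ, IsStoch W ∧
    pcXZn n p α (memoryless n W) ≤ ε ^ n ∧
    u = pcYZn n p α (memoryless n W) ^ ((n : ℝ)⁻¹)}

lemma aux_sum_prod (n : ℕ) (g : Fin n → Fin 2 → ℝ) :
    ∑ y : Fin n → Fin 2, ∏ k, g k (y k) = ∏ k, ∑ b, g k b := by
  rw [Finset.prod_univ_sum, Fintype.piFinset_univ]

lemma pXY_nonneg {α : ℝ} (hα0 : 0 ≤ α) (hα1 : α ≤ 1) (a b : Fin 2) :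
    0 ≤ pXY (1/2) α a b := by
  unfold pXY; split <;> split <;> nlinarith

lemma pXYn_nonneg {n : ℕ} {α : ℝ} (hα0 : 0 ≤ α) (hα1 : α ≤ 1)
    (x y : Fin n → Fin 2) : 0 ≤ pXYn n (1/2) α x y :=
  Finset.prod_nonneg fun k _ => pXY_nonneg hα0 hα1 _ _

lemma pXY_marginal {α : ℝ} (c : Fin 2) : ∑ b : Fin 2, pXY (1/2) α b c = 1/2 := by
  fin_cases c <;> simp [pXY, Fin.sum_univ_two] <;> ring

lemma pXYn_marginal {n : ℕ} {α : ℝ} (y : Fin n → Fin 2) :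
    ∑ x : Fin n → Fin 2, pXYn n (1/2) α x y = (1/2)^n := by
  have := aux_sum_prod n (fun k b => pXY (1/2) α b (y k))
  simp only [pXYn]
  rw [this]
  simp only [pXY_marginal]
  rw [Finset.prod_const]
  simp

lemma memoryless_chan {n : ℕ} {W : Fin 2 → Fin 2 → ℝ} (hW : IsStoch W) :
    IsChan n (memoryless n W) := by
  constructor
  · intro y z; exact Finset.prod_nonneg fun k _ => hW.1 _ _
  · intro y
    have := aux_sum_prod n (fun k b => W (y k) b)
    simp only [memoryless]
    rw [this]
    simp [hW.2]

lemma pcYZn_nonneg {n : ℕ} {α : ℝ} (hα0 : 0 ≤ α) (hα1 : α ≤ 1)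
    {Q : (Fin n → Fin 2) → (Fin n → Fin 2) → ℝ} (hQ : IsChan n Q) :
    0 ≤ pcYZn n (1/2) α Q := by
  refine Finset.sum_nonneg fun z _ => Real.iSup_nonneg fun y => ?_
  exact mul_nonneg (Finset.sum_nonneg fun x _ => pXYn_nonneg hα0 hα1 x y) (hQ.1 y z)

lemma pcYZn_le_one {n : ℕ} {α : ℝ}
    {Q : (Fin n → Fin 2) → (Fin n → Fin 2) → ℝ} (hQ : IsChan n Q) :
    pcYZn n (1/2) α Q ≤ 1 := by
  have h1 : ∀ z, (⨆ y, (∑ x, pXYn n (1/2) α x y) * Q y z) ≤ ∑ y, (1/2)^n * Q y z := by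
    intro z
    refine ciSup_le fun y => ?_
    rw [pXYn_marginal]
    exact Finset.single_le_sum (f := fun y' => (1/2:ℝ)^n * Q y' z)
      (fun y' _ => mul_nonneg (by positivity) (hQ.1 y' z)) (Finset.mem_univ y)
  calc pcYZn n (1/2) α Q ≤ ∑ z, ∑ y, (1/2:ℝ)^n * Q y z :=
        Finset.sum_le_sum fun z _ => h1 z
    _ = (1/2)^n * ∑ y, ∑ z, Q y z := by
        rw [Finset.sum_comm, Finset.mul_sum]
        exact Finset.sum_congr rfl fun y _ => by rw [Finset.mul_sum]
    _ = 1 := by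
        simp only [hQ.2, Finset.sum_const, Finset.card_univ, Fintype.card_fun,
          Fintype.card_fin, nsmul_eq_mul, mul_one]
        push_cast
        rw [← mul_pow]; norm_num

/-- For `X^n` i.i.d. `Bernoulli(1/2)`, `Y_k = X_k ⊕ V_k` with `V^n` i.i.d. `Bernoulli(α)`
independent of `X^n`, `α ∈ (0, 1/2)`: there exists `ε_L` with `1/2 ≤ ε_L < ᾱ` such that
for every `n ≥ 1` and every `ε ∈ [ε_L, ᾱ]`,
`h_n^i(ε) ≤ h̲_n(ε) ≤ h_n^i(ε) + α/(2ᾱ)`. -/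
theorem hLow_hIid_gap (α : ℝ) (hα : α ∈ Set.Ioo (0 : ℝ) (1 / 2)) :
    ∃ εL : ℝ, 1 / 2 ≤ εL ∧ εL < 1 - α ∧
      ∀ n : ℕ, 1 ≤ n → ∀ ε ∈ Set.Icc εL (1 - α),
        hIid n (1 / 2) α ε ≤ hLow n (1 / 2) α ε ∧
        hLow n (1 / 2) α ε ≤ hIid n (1 / 2) α ε + α / (2 * (1 - α)) := by
  obtain ⟨hα0, hα2⟩ := hα
  have h1α : (1:ℝ)/2 < 1 - α := by linarith
  have h12α : (0:ℝ) < 1 - 2*α := by linarith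
  have h2a : (0:ℝ) < 2*(1-α) := by linarith
  set γ : ℝ := (1 - 2*α) * α / (2*(1-α)) with hγdef
  have hγpos : 0 < γ := div_pos (mul_pos h12α hα0) h2a
  refine ⟨max (1/2) (1 - α - γ), le_max_left _ _, max_lt h1α (by linarith), ?_⟩
  intro n hn ε hε
  obtain ⟨hεL, hεU⟩ := hε
  have hε2 : 1/2 ≤ ε := le_trans (le_max_left _ _) hεL
  have hεγ : 1 - α - γ ≤ ε := le_trans (le_max_right _ _) hεL
  have hε0 : (0:ℝ) ≤ ε := by linarith
  set δ : ℝ := (1 - α - ε)/(1 - 2*α) with hδdef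
  have hδ0 : 0 ≤ δ := div_nonneg (by linarith) h12α.le
  have hδkey : δ * (1 - 2*α) = 1 - α - ε := div_mul_cancel₀ _ h12α.ne'
  have hγ2 : γ * (2*(1-α)) = (1 - 2*α) * α := div_mul_cancel₀ _ h2a.ne'
  have hδγ : δ ≤ α / (2*(1-α)) := by
    rw [hδdef, div_le_div_iff₀ h12α h2a]
    nlinarith [mul_le_mul_of_nonneg_right hεγ h2a.le]
  have hδc : α/(2*(1-α)) < 1/2 := by rw [div_lt_iff₀ h2a]; linarith
  have hδhalf : δ < 1/2 := lt_of_le_of_lt hδγ hδc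
  have h1δ0 : (0:ℝ) ≤ 1 - δ := by linarith
  have hα1 : α ≤ 1 := by linarith
  set W : Fin 2 → Fin 2 → ℝ := fun y z => if y = z then 1-δ else δ with hWdef
  have hW0 : ∀ y z, 0 ≤ W y z := by
    intro y z
    show (0:ℝ) ≤ if y = z then 1-δ else δ
    split <;> linarith
  have hWstoch : IsStoch W := by
    refine ⟨hW0, fun y => ?_⟩
    fin_cases y <;> simp [hWdef, Fin.sum_univ_two]
  have hQ := memoryless_chan (n := n) hWstoch
  have hJ : ∀ a c : Fin 2, ∑ b : Fin 2, pXY (1/2) α a b * W b c ≤ ε/2 := by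
    intro a c
    fin_cases a <;> fin_cases c <;>
      simp [pXY, hWdef, Fin.sum_univ_two] <;> nlinarith [hδkey, hε2]
  have hJ0 : ∀ a c : Fin 2, 0 ≤ ∑ b : Fin 2, pXY (1/2) α a b * W b c := fun a c =>
    Finset.sum_nonneg fun b _ => mul_nonneg (pXY_nonneg hα0.le hα1 _ _) (hW0 _ _)
  have hP : pcXZn n (1/2) α (memoryless n W) ≤ ε ^ n := by
    have hz : ∀ z : Fin n → Fin 2,
        (⨆ x, ∑ y, pXYn n (1/2) α x y * memoryless n W y z) ≤ (ε/2)^n := by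
      intro z
      refine ciSup_le fun x => ?_
      have hrw : ∀ y : Fin n → Fin 2, pXYn n (1/2) α x y * memoryless n W y z
          = ∏ k, (pXY (1/2) α (x k) (y k) * W (y k) (z k)) := by
        intro y; simp only [pXYn, memoryless]; rw [← Finset.prod_mul_distrib]
      calc ∑ y, pXYn n (1/2) α x y * memoryless n W y z
          = ∑ y : Fin n → Fin 2, ∏ k, (pXY (1/2) α (x k) (y k) * W (y k) (z k)) :=
            Finset.sum_congr rfl fun y _ => hrw y
        _ = ∏ k, ∑ b, pXY (1/2) α (x k) b * W b (z k) :=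
            aux_sum_prod n (fun k b => pXY (1/2) α (x k) b * W b (z k))
        _ ≤ ∏ (_k : Fin n), (ε/2) :=
            Finset.prod_le_prod (fun k _ => hJ0 _ _) (fun k _ => hJ _ _)
        _ = (ε/2)^n := by rw [Finset.prod_const]; simp
    calc pcXZn n (1/2) α (memoryless n W) ≤ ∑ _z : Fin n → Fin 2, (ε/2)^n :=
          Finset.sum_le_sum fun z _ => hz z
      _ = ε ^ n := by
          simp only [Finset.sum_const, Finset.card_univ, Fintype.card_fun, Fintype.card_fin,
            nsmul_eq_mul]
          push_cast
          rw [← mul_pow]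
          congr 1; ring
  have hU : (1-δ)^n ≤ pcYZn n (1/2) α (memoryless n W) := by
    have hz : ∀ z : Fin n → Fin 2,
        (1/2:ℝ)^n * (1-δ)^n ≤ ⨆ y, (∑ x, pXYn n (1/2) α x y) * memoryless n W y z := by
      intro z
      have hbd : BddAbove (Set.range fun y => (∑ x, pXYn n (1/2) α x y) * memoryless n W y z) :=
        Set.Finite.bddAbove (Set.finite_range _)
      refine le_ciSup_of_le hbd z ?_
      rw [pXYn_marginal]
      have hmz : memoryless n W z z = (1-δ)^n := by
        simp [memoryless, hWdef]
      rw [hmz]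
    calc ((1-δ):ℝ)^n = ∑ _z : Fin n → Fin 2, (1/2:ℝ)^n * (1-δ)^n := by
          simp only [Finset.sum_const, Finset.card_univ, Fintype.card_fun, Fintype.card_fin,
            nsmul_eq_mul]
          push_cast
          rw [← mul_assoc, ← mul_pow]; norm_num
      _ ≤ pcYZn n (1/2) α (memoryless n W) := Finset.sum_le_sum fun z _ => hz z
  set S1 := {u : ℝ | ∃ W' : Fin 2 → Fin 2 → ℝ, IsStoch W' ∧
    pcXZn n (1/2) α (memoryless n W') ≤ ε ^ n ∧
    u = pcYZn n (1/2) α (memoryless n W') ^ ((n : ℝ)⁻¹)} with hS1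
  set S2 := {u : ℝ | ∃ Q, IsChan n Q ∧ pcXZn n (1/2) α Q ≤ ε ^ n ∧
    u = pcYZn n (1/2) α Q ^ ((n : ℝ)⁻¹)} with hS2
  have hI : hIid n (1/2) α ε = sSup S1 := rfl
  have hL : hLow n (1/2) α ε = sSup S2 := rfl
  have hsub : S1 ⊆ S2 := by
    rintro u ⟨W', hW', hp, hu⟩
    exact ⟨memoryless n W', memoryless_chan hW', hp, hu⟩
  have hub : ∀ u ∈ S2, u ≤ 1 := by
    rintro u ⟨Q', hQ', hp, rfl⟩
    exact Real.rpow_le_one (pcYZn_nonneg hα0.le hα1 hQ') (pcYZn_le_one hQ') (by positivity)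
  have hbdd2 : BddAbove S2 := ⟨1, hub⟩
  have hbdd1 : BddAbove S1 := hbdd2.mono hsub
  have hmem : (pcYZn n (1/2) α (memoryless n W)) ^ ((n:ℝ)⁻¹) ∈ S1 := ⟨W, hWstoch, hP, rfl⟩
  have hne1 : S1.Nonempty := ⟨_, hmem⟩
  have hlowb : 1 - δ ≤ (pcYZn n (1/2) α (memoryless n W)) ^ ((n:ℝ)⁻¹) := by
    have h1 : (((1-δ)^n : ℝ)) ^ ((n:ℝ)⁻¹) = 1 - δ :=
      Real.pow_rpow_inv_natCast h1δ0 (by omega)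
    rw [← h1]
    exact Real.rpow_le_rpow (by positivity) hU (by positivity)
  constructor
  · rw [hI, hL]; exact csSup_le_csSup hbdd2 hne1 hsub
  · have h2 : hLow n (1/2) α ε ≤ 1 := by
      rw [hL]; exact csSup_le (hne1.mono hsub) hub
    have h3 : 1 - δ ≤ hIid n (1/2) α ε := by
      rw [hI]; exact le_trans hlowb (le_csSup hbdd1 hmem)
    linarith [hδγ]
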